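/- Let λ : ℝ → ℝ_{>0} be differentiable with 0 ≤ λ'(x) ≤ 1 for all x, σ the logistic function, and c, d ∈ ℝ. Define the zero-inflated Poisson kernel q(0, θ) = (1 − σ(c+θ)) + σ(c+θ) e^{−λ(d+θ)} and q(y, θ) = σ(c+θ) e^{−λ(d+θ)} λ(d+θ)^y / y! for y ≥ 1. Then for each y ∈ ℤ≥0, θ ↦ q(y+1, θ)/q(y, θ) is nondecreasing. -/

import Mathlib

/-!
For `y ≥ 1` the ratio is `λ(d+θ)/(y+1)`, monotone because `λ' ≥ 0`. For `y = 0`, writing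
`1 - σ(x) = σ(x) e^{-x}` turns the ratio into `λ(d+θ) · σ(c+θ - λ(d+θ))`: a product of two
nonnegative monotone factors, the second because `λ' ≤ 1` makes `θ - λ(d+θ)` nondecreasing.
-/

open Real

noncomputable def logistic (x : ℝ) : ℝ := (1 + Real.exp (-x))⁻¹

lemma logistic_eq_sigmoid : logistic = sigmoid := rfl

lemma sigmoid_sub_eq_exp_div (x y : ℝ) :
    sigmoid (x - y) = exp (-y) / (exp (-x) + exp (-y)) := by
  have hexp : exp (-(x - y)) * exp (-y) = exp (-x) := by rw [← exp_add]; ring_nf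
  rw [sigmoid_def, eq_div_iff (by positivity), ← hexp]
  field_simp
  ring

lemma zeroInflatedPoisson_ratio_zero (x L : ℝ) :
    sigmoid x * exp (-L) * L / (1 - sigmoid x + sigmoid x * exp (-L)) = L * sigmoid (x - L) := by
  have hinfl : 1 - sigmoid x = sigmoid x * exp (-x) := by
    rw [sigmoid_mul_rexp_neg, sigmoid_neg]
  rw [hinfl, sigmoid_sub_eq_exp_div, ← mul_add]
  have hσ := sigmoid_pos x
  field_simp

lemma poisson_term_ratio (A L : ℝ) (n : ℕ) (hA : A ≠ 0) (hL : L ≠ 0) :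
    (A * L ^ (n + 2) / (n + 2).factorial) / (A * L ^ (n + 1) / (n + 1).factorial) =
      L / (n + 2) := by
  rw [Nat.factorial_succ (n + 1)]
  push_cast
  field_simp
  ring

lemma monotone_id_sub_of_deriv_le_one {f : ℝ → ℝ} (hf : Differentiable ℝ f)
    (hf' : ∀ x, deriv f x ≤ 1) : Monotone fun x => x - f x := by
  refine monotone_of_deriv_nonneg (differentiable_id.fun_sub hf) fun x => ?_
  rw [((hasDerivAt_id' x).fun_sub (hf x).hasDerivAt).deriv]
  linarith [hf' x]

/-- For the zero-inflated Poisson kernel with `0 ≤ λ' ≤ 1`, the ratio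
`θ ↦ q(y+1,θ)/q(y,θ)` is nondecreasing in `θ` for each `y ∈ ℤ≥0`. -/
theorem zip_kernel_ratio_monotone
    (c d : ℝ) (lam : ℝ → ℝ) (hpos : ∀ x, 0 < lam x)
    (hdiff : Differentiable ℝ lam)
    (hd0 : ∀ x : ℝ, 0 ≤ deriv lam x) (hd1 : ∀ x : ℝ, deriv lam x ≤ 1)
    (q : ℕ → ℝ → ℝ)
    (hq0 : ∀ θ : ℝ, q 0 θ =
      (1 - logistic (c + θ)) + logistic (c + θ) * Real.exp (-(lam (d + θ))))
    (hq1 : ∀ (y : ℕ) (θ : ℝ), q (y + 1) θ =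
      logistic (c + θ) * Real.exp (-(lam (d + θ))) *
        (lam (d + θ)) ^ (y + 1) / (Nat.factorial (y + 1))) :
    ∀ y : ℕ, Monotone (fun θ : ℝ => q (y + 1) θ / q y θ) := by
  have hmean : Monotone fun θ => lam (d + θ) :=
    (monotone_of_deriv_nonneg hdiff hd0).comp (monotone_id.const_add d)
  rintro (_ | n)
  · have hratio : (fun θ => q 1 θ / q 0 θ) =
        fun θ => lam (d + θ) * sigmoid (c + θ - lam (d + θ)) := by
      funext θ
      rw [hq1, hq0, logistic_eq_sigmoid, ← zeroInflatedPoisson_ratio_zero]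
      simp
    have hshift : Monotone fun θ => c + θ - lam (d + θ) := fun a b hab => by
      have := monotone_id_sub_of_deriv_le_one hdiff hd1 (by linarith : d + a ≤ d + b)
      dsimp only at this ⊢
      linarith
    rw [hratio]
    exact hmean.mul (sigmoid_monotone.comp hshift) (fun θ => (hpos _).le)
      (fun θ => sigmoid_nonneg _)
  · have hratio : (fun θ => q (n + 2) θ / q (n + 1) θ) = fun θ => lam (d + θ) / (n + 2) := by
      funext θ
      rw [hq1, hq1]
      exact poisson_term_ratio _ _ n (mul_pos (sigmoid_pos _) (exp_pos _)).ne' (hpos _).ne'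
    rw [hratio]
    exact fun a b hab => div_le_div_of_nonneg_right (hmean hab) (by positivity)
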